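/- arXiv:2106.06382 — 2 statements merged into one kernel-verified Lean document; each statement's English description precedes it below -/
import Mathlib

section
/- Let Γ be a group acting by homeomorphisms on topological spaces Y and X, with X Hausdorff, and let β : Y → X be a continuous Γ-equivariant map. Fix y ∈ Y and set x := β(y). Define Λ := {g ∈ Γ : y ∈ closure(β⁻¹(interior(X^g)))}, where X^g := {z ∈ X : g·z = z}. Then Γ_x⁰ ⊆ Λ ⊆ Γ_x. -/
/-! The fixed-point set `Xᵍ` is closed because `X` is Hausdorff, so `β⁻¹(Xᵍ)` is a closed set
containing `β⁻¹(interior Xᵍ)` and hence its closure; the other inclusion is `subset_closure`. -/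

open Set MulAction

theorem isClosed_fixedBy {M α : Type*} [Monoid M] [MulAction M α] [TopologicalSpace α]
    [T2Space α] [ContinuousConstSMul M α] (m : M) : IsClosed (fixedBy α m) :=
  isClosed_eq (continuous_const_smul m) continuous_id

theorem Continuous.closure_preimage_interior_subset {X Y : Type*} [TopologicalSpace X]
    [TopologicalSpace Y] {f : Y → X} (hf : Continuous f) {s : Set X} (hs : IsClosed s) :
    closure (f ⁻¹' interior s) ⊆ f ⁻¹' s :=
  (hs.preimage hf).closure_subset_iff.mpr (preimage_mono interior_subset)

theorem stmt6_general {Γ Y X : Type*} [Group Γ]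
    [TopologicalSpace Y] [TopologicalSpace X] [T2Space X]
    [MulAction Γ X]
    [ContinuousConstSMul Γ X]
    (β : Y → X) (hβ : Continuous β)
    (y : Y) :
    (∀ g : Γ, β y ∈ interior {z : X | g • z = z} →
      y ∈ closure (β ⁻¹' interior {z : X | g • z = z})) ∧
    (∀ g : Γ, y ∈ closure (β ⁻¹' interior {z : X | g • z = z}) →
      g • β y = β y) :=
  ⟨fun _ hg => subset_closure hg,
    fun g hy => hβ.closure_preimage_interior_subset (isClosed_fixedBy g) hy⟩

/-- Proposition 5.1 (the inclusions `Γ_x⁰ ≤ Λ ≤ Γ_x`): for a continuous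
equivariant map `β : Y → X` with `X` Hausdorff, `y ∈ Y`, `x = β y`, and
`Λ = {g : y ∈ closure (β⁻¹(interior Xᵍ))}`, one has `Γ_x⁰ ⊆ Λ ⊆ Γ_x`. -/
theorem stmt6 {Γ Y X : Type*} [Group Γ]
    [TopologicalSpace Y] [TopologicalSpace X] [T2Space X]
    [MulAction Γ Y] [MulAction Γ X]
    [ContinuousConstSMul Γ Y] [ContinuousConstSMul Γ X]
    (β : Y → X) (hβ : Continuous β)
    (hequiv : ∀ (g : Γ) (y : Y), β (g • y) = g • β y) (y : Y) :
    (∀ g : Γ, β y ∈ interior {z : X | g • z = z} →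
      y ∈ closure (β ⁻¹' interior {z : X | g • z = z})) ∧
    (∀ g : Γ, y ∈ closure (β ⁻¹' interior {z : X | g • z = z}) →
      g • β y = β y) :=
  stmt6_general β hβ y
end

section
/- Let X be a discrete space, K a compact Hausdorff space, ι : X → OnePoint X the canonical embedding into the one-point compactification, η : X × K → β(X × K) the canonical map into the Stone–Čech compactification, and φ : β(X × K) → OnePoint X the unique continuous map with φ(η(x,k)) = ι x for all (x,k). Then for every y ∈ β(X × K) and x ∈ X with φ(y) = ι x, there exists k ∈ K such that y = η(x,k); equivalently, φ⁻¹(ι(X)) = η(X × K). -/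
open Set

/-! Since `x` is isolated in `OnePoint X`, the fibre `φ⁻¹{x}` is open, so it lies in the closure
of its trace on the dense set `η(X × K)`, which is `η({x} × K)`. The latter is compact, hence closed in
the Hausdorff space `β(X × K)`. -/

theorem DenseRange.preimage_subset_closure_image {W Y Z : Type*} [TopologicalSpace Y]
    [TopologicalSpace Z] {g : W → Y} (hg : DenseRange g) {φ : Y → Z} (hφ : Continuous φ)
    {V : Set Z} (hV : IsOpen V) : φ ⁻¹' V ⊆ closure (g '' ((φ ∘ g) ⁻¹' V)) := by
  rw [preimage_comp, image_preimage_eq_inter_range]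
  exact hg.open_subset_closure_inter (hV.preimage hφ)

theorem OnePoint.isOpen_singleton_coe {X : Type*} [TopologicalSpace X] [DiscreteTopology X]
    (x : X) : IsOpen {(x : OnePoint X)} := by
  simpa using OnePoint.isOpen_image_coe.mpr (isOpen_discrete {x})

theorem preimage_coe_subset_image_stoneCechUnit {X K : Type*} [TopologicalSpace X]
    [DiscreteTopology X] [TopologicalSpace K] [CompactSpace K]
    {φ : StoneCech (X × K) → OnePoint X} (hφ : Continuous φ)
    (hext : ∀ (x : X) (k : K), φ (stoneCechUnit (x, k)) = (x : OnePoint X)) (x : X) :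
    φ ⁻¹' {(x : OnePoint X)} ⊆ stoneCechUnit '' ({x} ×ˢ univ) := by
  have hpre : (φ ∘ stoneCechUnit) ⁻¹' {(x : OnePoint X)} = ({x} ×ˢ univ : Set (X × K)) := by
    ext ⟨x', k⟩
    simp [hext]
  have hclosed : IsClosed (stoneCechUnit '' ({x} ×ˢ univ : Set (X × K))) :=
    ((isCompact_singleton.prod isCompact_univ).image continuous_stoneCechUnit).isClosed
  simpa [hpre, hclosed.closure_eq] using
    denseRange_stoneCechUnit.preimage_subset_closure_image hφ (OnePoint.isOpen_singleton_coe x)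

theorem stmt9_general {X K : Type*} [TopologicalSpace X] [DiscreteTopology X]
    [TopologicalSpace K] [CompactSpace K]
    (φ : StoneCech (X × K) → OnePoint X) (hφ : Continuous φ)
    (hext : ∀ (x : X) (k : K), φ (stoneCechUnit (x, k)) = (x : OnePoint X)) :
    (∀ (y : StoneCech (X × K)) (x : X), φ y = (x : OnePoint X) →
      ∃ k : K, y = stoneCechUnit (x, k)) ∧
    φ ⁻¹' (Set.range fun x : X => (x : OnePoint X)) =
      Set.range (stoneCechUnit : X × K → StoneCech (X × K)) := by
  have hfiber (y : StoneCech (X × K)) (x : X) (hy : φ y = x) :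
      ∃ k : K, y = stoneCechUnit (x, k) := by
    obtain ⟨⟨x', k⟩, ⟨rfl, -⟩, rfl⟩ :=
      preimage_coe_subset_image_stoneCechUnit hφ hext x (mem_singleton_iff.mpr hy)
    exact ⟨k, rfl⟩
  refine ⟨hfiber, Subset.antisymm ?_ ?_⟩
  · rintro y ⟨x, hx⟩
    obtain ⟨k, rfl⟩ := hfiber y x hx.symm
    exact mem_range_self _
  · rintro _ ⟨⟨x, k⟩, rfl⟩
    exact ⟨x, (hext x k).symm⟩

/-- Theorem 3.9, the claim `φ⁻¹(X) = X × K`: for discrete `X` and compact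
Hausdorff `K`, any point of `β(X × K)` mapping into `X ⊆ OnePoint X` under the
canonical map `φ` lies in the image of `X × K`. -/
theorem stmt9 {X K : Type*} [TopologicalSpace X] [DiscreteTopology X]
    [TopologicalSpace K] [CompactSpace K] [T2Space K]
    (φ : StoneCech (X × K) → OnePoint X) (hφ : Continuous φ)
    (hext : ∀ (x : X) (k : K), φ (stoneCechUnit (x, k)) = (x : OnePoint X)) :
    (∀ (y : StoneCech (X × K)) (x : X), φ y = (x : OnePoint X) →
      ∃ k : K, y = stoneCechUnit (x, k)) ∧
    φ ⁻¹' (Set.range fun x : X => (x : OnePoint X)) =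
      Set.range (stoneCechUnit : X × K → StoneCech (X × K)) :=
  stmt9_general φ hφ hext
end
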